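/- For odd n = 2m+1, the middle polynomial satisfies the decomposition B^+_{n,(n+1)/2}(t) = Σ_{k=1}^{m} [ (t·B^+_{n-1,k}(t) + B^+_{n-1,n-k}(t)) + (B^+_{n-1,-k}(t) + B^+_{n-1,-(n-k)}(t)) ]. -/
import Mathlib


open Finset Polynomial

/-- A signed permutation in the hyperoctahedral group `B_n`: a bijection of
`{±1,…,±n}` with `σ(-i) = -σ(i)`, encoded by its values on `1,…,n`
(extended by `0` elsewhere). -/
structure SignedPerm (n : ℕ) where
  toFun : ℕ → ℤ
  mem_abs : ∀ i ∈ Finset.Icc 1 n, (toFun i).natAbs ∈ Finset.Icc 1 n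
  inj_abs : ∀ i ∈ Finset.Icc 1 n, ∀ j ∈ Finset.Icc 1 n,
      (toFun i).natAbs = (toFun j).natAbs → i = j
  eq_zero : ∀ i, i ∉ Finset.Icc 1 n → toFun i = 0

/-- The extended word `σ_0 σ_1 ⋯ σ_n σ_{n+1}` with `σ_0 = 0` and
`σ_{n+1} = -∞` (modeled by `-(n+1)`, which is smaller than every entry). -/
def word {n : ℕ} (σ : SignedPerm n) (i : ℕ) : ℤ :=
  if i ≤ n then σ.toFun i else -(n + 1 : ℤ)

/-- The number of type-B descents: `|{i ∈ [0,n-1] : σ_i > σ_{i+1}}|`, `σ_0 = 0`. -/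
def desB {n : ℕ} (σ : SignedPerm n) : ℕ :=
  ((Finset.range n).filter (fun i => word σ (i + 1) < word σ i)).card

/-- `a` is the starting position of a slide of `σ`, i.e. of a maximal
decreasing run of length at least 2 in the extended word. -/
def IsSlideStart {n : ℕ} (σ : SignedPerm n) (a : ℕ) : Prop :=
  a ≤ n ∧ (a = 0 ∨ word σ (a - 1) < word σ a) ∧ word σ (a + 1) < word σ a

/-- The number of slides of `σ` (maximal decreasing runs of length ≥ 2 in the
extended word), counted via their starting positions. -/
def slides {n : ℕ} (σ : SignedPerm n) : ℕ :=
  ((Finset.range (n + 1)).filter (fun a =>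
      (a = 0 ∨ word σ (a - 1) < word σ a) ∧ word σ (a + 1) < word σ a)).card

/-- `B^+(n,j,r)`: the number of `σ ∈ B_n` with `σ_n > 0`, `σ_1 = j` and
exactly `r` type-B descents (`j`, `r` integers; the count is `0` for `r < 0`). -/
noncomputable def BP (n : ℕ) (j r : ℤ) : ℕ :=
  Nat.card {σ : SignedPerm n // 0 < σ.toFun n ∧ σ.toFun 1 = j ∧ (desB σ : ℤ) = r}

/-- `B^{++}(n,k)`: number of `σ ∈ B_n` with `σ_1 > 0`, `σ_n > 0`, `k` descents. -/
noncomputable def BPP (n k : ℕ) : ℕ :=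
  Nat.card {σ : SignedPerm n // 0 < σ.toFun 1 ∧ 0 < σ.toFun n ∧ desB σ = k}

/-- `B^{-+}(n,k)`: number of `σ ∈ B_n` with `σ_1 < 0`, `σ_n > 0`, `k` descents. -/
noncomputable def BMP (n k : ℕ) : ℕ :=
  Nat.card {σ : SignedPerm n // σ.toFun 1 < 0 ∧ 0 < σ.toFun n ∧ desB σ = k}

/-- `b^{++}(n,k,s)`: number of `σ ∈ B_n` with `σ_1 > 0`, `σ_n > 0`,
`k` descents and `s+1` slides. -/
noncomputable def bPP (n k s : ℕ) : ℕ :=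
  Nat.card {σ : SignedPerm n //
    0 < σ.toFun 1 ∧ 0 < σ.toFun n ∧ desB σ = k ∧ slides σ = s + 1}

/-- `b^{-+}(n,k,s)`: number of `σ ∈ B_n` with `σ_1 < 0`, `σ_n > 0`,
`k` descents and `s+1` slides. -/
noncomputable def bMP (n k s : ℕ) : ℕ :=
  Nat.card {σ : SignedPerm n //
    σ.toFun 1 < 0 ∧ 0 < σ.toFun n ∧ desB σ = k ∧ slides σ = s + 1}

/-- Number of `σ ∈ B_n` with `σ_n > 0` and `k` descents. -/
noncomputable def BplusCount (n k : ℕ) : ℕ :=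
  Nat.card {σ : SignedPerm n // 0 < σ.toFun n ∧ desB σ = k}

/-- Number of `σ ∈ B_n` with `k` descents. -/
noncomputable def Ball (n k : ℕ) : ℕ := Nat.card {σ : SignedPerm n // desB σ = k}

/-- The `j`-Eulerian polynomial of type `B^+`: `B^+_{n,j}(t) = Σ_r B^+(n,j,r) t^r`. -/
noncomputable def BPpoly (n : ℕ) (j : ℤ) : Polynomial ℤ :=
  ∑ r ∈ Finset.range (n + 1), Polynomial.C (BP n j (r : ℤ) : ℤ) * Polynomial.X ^ r

/-- The type-B Eulerian polynomial `B_n(t) = Σ_{σ ∈ B_n} t^{des_B σ}`. -/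
noncomputable def Bfullpoly (n : ℕ) : Polynomial ℤ :=
  ∑ k ∈ Finset.range (n + 1), Polynomial.C (Ball n k : ℤ) * Polynomial.X ^ k

/-- The symmetrized `j`-Eulerian polynomial `𝔹^+_{n,j}(t)`. -/
noncomputable def BsymPoly (n j : ℕ) : Polynomial ℤ :=
  if 2 * j = n + 1 then BPpoly n (j : ℤ)
  else BPpoly n (j : ℤ) + BPpoly n ((n : ℤ) + 1 - j)


-- ===== auxiliary development =====

theorem SignedPerm.ext' {n : ℕ} {σ τ : SignedPerm n} (h : σ.toFun = τ.toFun) : σ = τ := by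
  cases σ; cases τ; cases h; rfl

instance SignedPerm.finite (n : ℕ) : Finite (SignedPerm n) := by
  have : ∀ σ : SignedPerm n, ∀ i : Finset.Icc 1 n, σ.toFun i ∈ Finset.Icc (-(n:ℤ)) n := by
    intro σ i
    have := σ.mem_abs i i.2
    simp only [Finset.mem_Icc] at *
    omega
  apply Finite.of_injective (fun (σ : SignedPerm n) (i : Finset.Icc 1 n) =>
    (⟨σ.toFun i, this σ i⟩ : Finset.Icc (-(n:ℤ)) n))
  intro σ τ h
  apply SignedPerm.ext'
  funext i
  by_cases hi : i ∈ Finset.Icc 1 n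
  · have := congrFun h ⟨i, hi⟩
    simpa using this
  · rw [σ.eq_zero i hi, τ.eq_zero i hi]

lemma desB_le {n : ℕ} (σ : SignedPerm n) : desB σ ≤ n := by
  classical
  exact le_trans (Finset.card_filter_le _ _) (by simp)

lemma BP_eq_zero_of_lt {n : ℕ} {j r : ℤ} (hr : r < 0 ∨ (n : ℤ) < r) : BP n j r = 0 := by
  have : IsEmpty {σ : SignedPerm n // 0 < σ.toFun n ∧ σ.toFun 1 = j ∧ (desB σ : ℤ) = r} := by
    constructor
    rintro ⟨σ, -, -, hd⟩
    have := desB_le σ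
    omega
  exact Nat.card_of_isEmpty

-- relabeling maps
def rl (p v : ℤ) : ℤ := if p < v then v - 1 else if v < -p then v + 1 else v
def ur (p v : ℤ) : ℤ := if p ≤ v then v + 1 else if v ≤ -p then v - 1 else v

lemma rl_ur (p v : ℤ) (hp : 0 < p) : rl p (ur p v) = v := by
  simp only [rl, ur]; split_ifs <;> omega

lemma ur_rl (p v : ℤ) (hp : 0 < p) (h1 : v ≠ p) (h2 : v ≠ -p) : ur p (rl p v) = v := by
  simp only [rl, ur]; split_ifs <;> omega

lemma ur_lt_ur (p a b : ℤ) : ur p a < ur p b ↔ a < b := by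
  simp only [ur]; split_ifs <;> omega

lemma ur_pos (p v : ℤ) (hp : 0 < p) : 0 < ur p v ↔ 0 < v := by
  simp only [ur]; split_ifs <;> omega

lemma ur_lt_p (p v : ℤ) : ur p v < p ↔ v < p := by
  simp only [ur]; split_ifs <;> omega

variable (m : ℕ)

/-- insert `m+1` in front and shift values with abs ≥ m+1 up. -/
def toUp (τ : SignedPerm (2*m)) : SignedPerm (2*m+1) where
  toFun i := if i = 1 then (m:ℤ)+1 else
    if 2 ≤ i ∧ i ≤ 2*m+1 then ur ((m:ℤ)+1) (τ.toFun (i-1)) else 0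
  mem_abs := by
    intro i hi
    simp only [Finset.mem_Icc] at hi ⊢
    by_cases h1 : i = 1
    · simp [h1]; omega
    · have h2 : 2 ≤ i ∧ i ≤ 2*m+1 := by omega
      have := τ.mem_abs (i-1) (by simp only [Finset.mem_Icc]; omega)
      simp only [Finset.mem_Icc] at this
      simp only [if_neg h1, if_pos h2, ur]
      split_ifs <;> omega
  inj_abs := by
    intro i hi j hj h
    simp only [Finset.mem_Icc] at hi hj
    by_cases h1 : i = 1 <;> by_cases h2 : j = 1
    · omega
    · exfalso
      have hj2 : 2 ≤ j ∧ j ≤ 2*m+1 := by omega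
      have := τ.mem_abs (j-1) (by simp only [Finset.mem_Icc]; omega)
      simp only [Finset.mem_Icc] at this
      simp only [h1, if_pos rfl, if_neg h2, if_pos hj2, ur] at h
      split_ifs at h <;> omega
    · exfalso
      have hi2 : 2 ≤ i ∧ i ≤ 2*m+1 := by omega
      have := τ.mem_abs (i-1) (by simp only [Finset.mem_Icc]; omega)
      simp only [Finset.mem_Icc] at this
      simp only [h2, if_pos rfl, if_neg h1, if_pos hi2, ur] at h
      split_ifs at h <;> omega
    · have hi2 : 2 ≤ i ∧ i ≤ 2*m+1 := by omega
      have hj2 : 2 ≤ j ∧ j ≤ 2*m+1 := by omega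
      simp only [if_neg h1, if_pos hi2, if_neg h2, if_pos hj2, ur] at h
      have hti := τ.mem_abs (i-1) (by simp only [Finset.mem_Icc]; omega)
      have htj := τ.mem_abs (j-1) (by simp only [Finset.mem_Icc]; omega)
      simp only [Finset.mem_Icc] at hti htj
      have : (τ.toFun (i-1)).natAbs = (τ.toFun (j-1)).natAbs := by
        split_ifs at h <;> omega
      have := τ.inj_abs (i-1) (by simp only [Finset.mem_Icc]; omega)
        (j-1) (by simp only [Finset.mem_Icc]; omega) this
      omega
  eq_zero := by
    intro i hi
    simp only [Finset.mem_Icc] at hi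
    have h1 : i ≠ 1 := by omega
    have h2 : ¬ (2 ≤ i ∧ i ≤ 2*m+1) := by omega
    simp [h1, h2]

/-- the abs value `m+1` is taken only at position 1 -/
lemma abs_ne (σ : SignedPerm (2*m+1)) (h : σ.toFun 1 = (m:ℤ)+1) (i : ℕ)
    (hi : 2 ≤ i ∧ i ≤ 2*m+1) : (σ.toFun i).natAbs ≠ m+1 := by
  intro hc
  have h1 : (1:ℕ) ∈ Finset.Icc 1 (2*m+1) := by simp
  have := σ.inj_abs i (by simp only [Finset.mem_Icc]; omega) 1 h1 (by rw [hc, h]; omega)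
  omega

def toDown (σ : SignedPerm (2*m+1)) (h : σ.toFun 1 = (m:ℤ)+1) : SignedPerm (2*m) where
  toFun i := if 1 ≤ i ∧ i ≤ 2*m then rl ((m:ℤ)+1) (σ.toFun (i+1)) else 0
  mem_abs := by
    intro i hi
    simp only [Finset.mem_Icc] at hi ⊢
    have hI : 1 ≤ i ∧ i ≤ 2*m := hi
    have hne := abs_ne m σ h (i+1) (by omega)
    have := σ.mem_abs (i+1) (by simp only [Finset.mem_Icc]; omega)
    simp only [Finset.mem_Icc] at this
    simp only [if_pos hI, rl]
    split_ifs <;> omega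
  inj_abs := by
    intro i hi j hj hEq
    simp only [Finset.mem_Icc] at hi hj
    simp only [if_pos hi, if_pos hj, rl] at hEq
    have hnei := abs_ne m σ h (i+1) (by omega)
    have hnej := abs_ne m σ h (j+1) (by omega)
    have h1 := σ.mem_abs (i+1) (by simp only [Finset.mem_Icc]; omega)
    have h2 := σ.mem_abs (j+1) (by simp only [Finset.mem_Icc]; omega)
    simp only [Finset.mem_Icc] at h1 h2
    have : (σ.toFun (i+1)).natAbs = (σ.toFun (j+1)).natAbs := by
      split_ifs at hEq <;> omega
    have := σ.inj_abs (i+1) (by simp only [Finset.mem_Icc]; omega)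
      (j+1) (by simp only [Finset.mem_Icc]; omega) this
    omega
  eq_zero := by
    intro i hi
    simp only [Finset.mem_Icc] at hi
    have : ¬ (1 ≤ i ∧ i ≤ 2*m) := by omega
    simp [this]

lemma toUp_toFun_one (τ : SignedPerm (2*m)) : (toUp m τ).toFun 1 = (m:ℤ)+1 := by
  simp [toUp]

lemma toUp_toFun (τ : SignedPerm (2*m)) (i : ℕ) (hi : 2 ≤ i ∧ i ≤ 2*m+1) :
    (toUp m τ).toFun i = ur ((m:ℤ)+1) (τ.toFun (i-1)) := by
  have h1 : i ≠ 1 := by omega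
  simp [toUp, h1, hi]

lemma toDown_toFun (σ : SignedPerm (2*m+1)) (h : σ.toFun 1 = (m:ℤ)+1) (i : ℕ)
    (hi : 1 ≤ i ∧ i ≤ 2*m) :
    (toDown m σ h).toFun i = rl ((m:ℤ)+1) (σ.toFun (i+1)) := by
  simp [toDown, hi]

lemma toDown_toUp (τ : SignedPerm (2*m)) :
    toDown m (toUp m τ) (toUp_toFun_one m τ) = τ := by
  apply SignedPerm.ext'
  funext i
  by_cases hi : 1 ≤ i ∧ i ≤ 2*m
  · rw [toDown_toFun m _ _ i hi, toUp_toFun m τ (i+1) (by omega)]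
    simp only [Nat.add_sub_cancel]
    exact rl_ur _ _ (by positivity)
  · rw [(toDown m (toUp m τ) (toUp_toFun_one m τ)).eq_zero i (by simp only [Finset.mem_Icc]; omega),
      τ.eq_zero i (by simp only [Finset.mem_Icc]; omega)]

lemma toUp_toDown (σ : SignedPerm (2*m+1)) (h : σ.toFun 1 = (m:ℤ)+1) :
    toUp m (toDown m σ h) = σ := by
  apply SignedPerm.ext'
  funext i
  by_cases h1 : i = 1
  · rw [h1, toUp_toFun_one, h]
  by_cases hi : 2 ≤ i ∧ i ≤ 2*m+1
  · rw [toUp_toFun m _ i hi, toDown_toFun m σ h (i-1) (by omega)]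
    have : i - 1 + 1 = i := by omega
    rw [this]
    have hne := abs_ne m σ h i hi
    have hb := σ.mem_abs i (by simp only [Finset.mem_Icc]; omega)
    simp only [Finset.mem_Icc] at hb
    exact ur_rl _ _ (by positivity) (by omega) (by omega)
  · rw [(toUp m (toDown m σ h)).eq_zero i (by simp only [Finset.mem_Icc]; omega),
      σ.eq_zero i (by simp only [Finset.mem_Icc]; omega)]

def dterm {n : ℕ} (σ : SignedPerm n) (i : ℕ) : ℕ := if word σ (i+1) < word σ i then 1 else 0

lemma desB_eq_sum {n : ℕ} (σ : SignedPerm n) : desB σ = ∑ i ∈ Finset.range n, dterm σ i := by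
  classical
  rw [desB, Finset.card_filter]
  rfl

lemma word_toUp_zero (τ : SignedPerm (2*m)) : word (toUp m τ) 0 = 0 := by
  rw [word, if_pos (by omega), (toUp m τ).eq_zero 0 (by simp)]

lemma word_toUp_one (τ : SignedPerm (2*m)) : word (toUp m τ) 1 = (m:ℤ)+1 := by
  rw [word, if_pos (by omega), toUp_toFun_one]

lemma word_toUp (τ : SignedPerm (2*m)) (i : ℕ) (hi : 2 ≤ i ∧ i ≤ 2*m+1) :
    word (toUp m τ) i = ur ((m:ℤ)+1) (τ.toFun (i-1)) := by
  rw [word, if_pos (by omega), toUp_toFun m τ i hi]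

lemma word_eval {n : ℕ} (τ : SignedPerm n) (i : ℕ) (hi : i ≤ n) : word τ i = τ.toFun i := by
  rw [word, if_pos hi]

lemma word_zero {n : ℕ} (τ : SignedPerm n) : word τ 0 = 0 := by
  rw [word, if_pos (by omega), τ.eq_zero 0 (by simp)]

lemma desB_toUp (hm : 1 ≤ m) (τ : SignedPerm (2*m)) :
    desB (toUp m τ) = desB τ + (if 1 ≤ τ.toFun 1 ∧ τ.toFun 1 ≤ (m:ℤ) then 1 else 0) := by
  classical
  have hτ1 : τ.toFun 1 ≠ 0 := by
    have := τ.mem_abs 1 (by simp only [Finset.mem_Icc]; omega)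
    simp only [Finset.mem_Icc] at this; omega
  have e1 : desB (toUp m τ) =
      (∑ i ∈ Finset.range (2*m-1), dterm (toUp m τ) (i+2)) + dterm (toUp m τ) 1
        + dterm (toUp m τ) 0 := by
    rw [desB_eq_sum, Finset.sum_range_succ']
    congr 1
    have := Finset.sum_range_succ' (fun i => dterm (toUp m τ) (i+1)) (2*m-1)
    rw [show 2*m-1+1 = 2*m from by omega] at this
    simpa using this
  have e2 : desB τ = (∑ i ∈ Finset.range (2*m-1), dterm τ (i+1)) + dterm τ 0 := by
    rw [desB_eq_sum]
    have := Finset.sum_range_succ' (fun i => dterm τ i) (2*m-1)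
    rw [show 2*m-1+1 = 2*m from by omega] at this
    simpa using this
  have tail : ∀ i ∈ Finset.range (2*m-1), dterm (toUp m τ) (i+2) = dterm τ (i+1) := by
    intro i hi
    simp only [Finset.mem_range] at hi
    rw [dterm, dterm, word_toUp m τ (i+2) (by omega), word_toUp m τ (i+2+1) (by omega),
      word_eval τ (i+1) (by omega), word_eval τ (i+1+1) (by omega)]
    simp only [show i+2-1 = i+1 from by omega, show i+2+1-1 = i+2 from by omega]
    rw [show i+1+1 = i+2 from rfl]
    by_cases hc : τ.toFun (i+2) < τ.toFun (i+1)
    · rw [if_pos ((ur_lt_ur _ _ _).2 hc), if_pos hc]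
    · rw [if_neg (fun hcc => hc ((ur_lt_ur _ _ _).1 hcc)), if_neg hc]
  rw [Finset.sum_congr rfl tail] at e1
  have hF0 : dterm (toUp m τ) 0 = 0 := by
    rw [dterm, word_toUp_zero, word_toUp_one, if_neg (by omega)]
  have hF1 : dterm (toUp m τ) 1 = if τ.toFun 1 < (m:ℤ)+1 then 1 else 0 := by
    rw [dterm, word_toUp_one, word_toUp m τ 2 (by omega)]
    simp only [show 2-1=1 from rfl, ur_lt_p]
  have hG0 : dterm τ 0 = if τ.toFun 1 < 0 then 1 else 0 := by
    rw [dterm, word_zero, word_eval τ 1 (by omega)]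
  rw [e1, e2, hF0, hF1, hG0]
  split_ifs <;> omega

lemma toUp_last_pos (hm : 1 ≤ m) (τ : SignedPerm (2*m)) :
    0 < (toUp m τ).toFun (2*m+1) ↔ 0 < τ.toFun (2*m) := by
  rw [toUp_toFun m τ (2*m+1) (by omega), show 2*m+1-1 = 2*m from by omega]
  exact ur_pos _ _ (by positivity)

lemma toUp_second (hm : 1 ≤ m) (τ : SignedPerm (2*m)) :
    rl ((m:ℤ)+1) ((toUp m τ).toFun 2) = τ.toFun 1 := by
  rw [toUp_toFun m τ 2 (by omega), show 2-1 = 1 from rfl]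
  exact rl_ur _ _ (by positivity)

def upEquiv : SignedPerm (2*m) ≃ {σ : SignedPerm (2*m+1) // σ.toFun 1 = (m:ℤ)+1} where
  toFun τ := ⟨toUp m τ, toUp_toFun_one m τ⟩
  invFun σ := toDown m σ.1 σ.2
  left_inv τ := toDown_toUp m τ
  right_inv σ := Subtype.ext (toUp_toDown m σ.1 σ.2)

lemma nat_card_sigma {ι : Type*} [Fintype ι] (f : ι → Type*) [∀ i, Finite (f i)] :
    Nat.card (Σ i, f i) = ∑ i, Nat.card (f i) := by
  letI := fun i => Fintype.ofFinite (f i)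
  simp [Nat.card_eq_fintype_card]

lemma fiber_card (hm : 1 ≤ m) (j r : ℤ) :
    Nat.card {σ : SignedPerm (2*m+1) // σ.toFun 1 = (m:ℤ)+1 ∧
      (0 < σ.toFun (2*m+1) ∧ (desB σ : ℤ) = r ∧ rl ((m:ℤ)+1) (σ.toFun 2) = j)} =
    BP (2*m) j (r - if 1 ≤ j ∧ j ≤ (m:ℤ) then 1 else 0) := by
  rw [BP]
  apply Nat.card_congr
  apply Equiv.symm
  refine Equiv.trans (Equiv.subtypeEquiv (upEquiv m) ?_)
    (Equiv.subtypeSubtypeEquivSubtypeInter _ _)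
  intro τ
  show _ ↔ (0 < (toUp m τ).toFun (2*m+1) ∧ ((desB (toUp m τ)) : ℤ) = r ∧
      rl ((m:ℤ)+1) ((toUp m τ).toFun 2) = j)
  rw [toUp_last_pos m hm τ, toUp_second m hm τ, desB_toUp m hm τ]
  constructor
  · rintro ⟨h1, h2, h3⟩
    refine ⟨h1, ?_, h2⟩
    subst h2
    push_cast
    split_ifs at h3 ⊢ <;> omega
  · rintro ⟨h1, h2, h3⟩
    refine ⟨h1, h3, ?_⟩
    subst h3
    push_cast at h2
    split_ifs at h2 ⊢ <;> omega

lemma card_partition (hm : 1 ≤ m) (r : ℤ) :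
    BP (2*m+1) ((m:ℤ)+1) r = ∑ j ∈ (Finset.Icc (-(2*m):ℤ) (2*m)).erase 0,
      BP (2*m) j (r - if 1 ≤ j ∧ j ≤ (m:ℤ) then 1 else 0) := by
  classical
  rw [BP]
  have hmem : ∀ σ : {σ : SignedPerm (2*m+1) // 0 < σ.toFun (2*m+1) ∧
      σ.toFun 1 = (m:ℤ)+1 ∧ (desB σ : ℤ) = r},
      rl ((m:ℤ)+1) (σ.1.toFun 2) ∈ (Finset.Icc (-(2*m):ℤ) (2*m)).erase 0 := by
    rintro ⟨σ, hpos, h1, hd⟩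
    have hne := abs_ne m σ h1 2 (by omega)
    have hb := σ.mem_abs 2 (by simp only [Finset.mem_Icc]; omega)
    simp only [Finset.mem_Icc] at hb
    simp only [Finset.mem_erase, Finset.mem_Icc, rl]
    split_ifs <;> omega
  set g : {σ : SignedPerm (2*m+1) // 0 < σ.toFun (2*m+1) ∧
      σ.toFun 1 = (m:ℤ)+1 ∧ (desB σ : ℤ) = r} →
      ((Finset.Icc (-(2*m):ℤ) (2*m)).erase 0 : Finset ℤ) :=
    fun σ => ⟨rl ((m:ℤ)+1) (σ.1.toFun 2), hmem σ⟩ with hg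
  rw [← Nat.card_congr (Equiv.sigmaFiberEquiv g), nat_card_sigma,
    ← Finset.sum_coe_sort ((Finset.Icc (-(2*m):ℤ) (2*m)).erase 0)]
  apply Finset.sum_congr rfl
  intro j _
  rw [← fiber_card m hm (j:ℤ) r]
  apply Nat.card_congr
  refine Equiv.trans (Equiv.subtypeEquivRight (fun x => ?_))
    (Equiv.trans (Equiv.subtypeSubtypeEquivSubtypeInter _ _)
      (Equiv.subtypeEquivRight (fun σ => by tauto)))
  show g x = j ↔ _
  rw [hg, Subtype.ext_iff]

lemma sum_piece (hm : 1 ≤ m) (h : ℤ → ℕ) (c : ℤ → ℤ) (lo hi : ℤ)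
    (hbij : ∀ k : ℕ, 1 ≤ k → k ≤ m → c k ∈ Finset.Icc lo hi)
    (hinv : ∀ z ∈ Finset.Icc lo hi, ∃ k : ℕ, 1 ≤ k ∧ k ≤ m ∧ c k = z)
    (hinj : ∀ k1 k2 : ℕ, 1 ≤ k1 → k1 ≤ m → 1 ≤ k2 → k2 ≤ m → c k1 = c k2 → k1 = k2) :
    ∑ j ∈ Finset.Icc lo hi, h j = ∑ k ∈ Finset.Icc 1 m, h (c (k:ℤ)) := by
  classical
  refine (Finset.sum_bij (fun (k : ℕ) (_ : k ∈ Finset.Icc 1 m) => c k) ?_ ?_ ?_ ?_).symm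
  · intro k hk; simp only [Finset.mem_Icc] at hk; exact hbij k hk.1 hk.2
  · intro k1 h1 k2 h2 hc
    simp only [Finset.mem_Icc] at h1 h2
    exact hinj k1 k2 h1.1 h1.2 h2.1 h2.2 hc
  · intro z hz
    obtain ⟨k, hk1, hk2, hk3⟩ := hinv z hz
    exact ⟨k, by simp only [Finset.mem_Icc]; exact ⟨hk1, hk2⟩, hk3⟩
  · intros; rfl

lemma sum_J (hm : 1 ≤ m) (h : ℤ → ℕ) :
    ∑ j ∈ (Finset.Icc (-(2*m):ℤ) (2*m)).erase 0, h j
      = ∑ k ∈ Finset.Icc 1 m,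
        (h (k:ℤ) + h (2*(m:ℤ)+1-(k:ℤ)) + h (-(k:ℤ)) + h (-(2*(m:ℤ)+1-(k:ℤ)))) := by
  classical
  have hsplit : (Finset.Icc (-(2*m):ℤ) (2*m)).erase 0 =
      ((Finset.Icc (1:ℤ) (m:ℤ) ∪ Finset.Icc ((m:ℤ)+1) (2*m)) ∪
        (Finset.Icc (-(m:ℤ)) (-1) ∪ Finset.Icc (-(2*m):ℤ) (-(m:ℤ)-1))) := by
    ext z
    simp only [Finset.mem_erase, Finset.mem_Icc, Finset.mem_union]
    omega
  have d1 : Disjoint (Finset.Icc (1:ℤ) (m:ℤ)) (Finset.Icc ((m:ℤ)+1) (2*m)) := by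
    rw [Finset.disjoint_left]; intro z; simp only [Finset.mem_Icc]; omega
  have d2 : Disjoint (Finset.Icc (-(m:ℤ)) (-1)) (Finset.Icc (-(2*m):ℤ) (-(m:ℤ)-1)) := by
    rw [Finset.disjoint_left]; intro z; simp only [Finset.mem_Icc]; omega
  have d3 : Disjoint (Finset.Icc (1:ℤ) (m:ℤ) ∪ Finset.Icc ((m:ℤ)+1) (2*m))
      (Finset.Icc (-(m:ℤ)) (-1) ∪ Finset.Icc (-(2*m):ℤ) (-(m:ℤ)-1)) := by
    rw [Finset.disjoint_left]; intro z
    simp only [Finset.mem_Icc, Finset.mem_union]; omega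
  rw [hsplit, Finset.sum_union d3, Finset.sum_union d1, Finset.sum_union d2]
  have e1 : ∑ j ∈ Finset.Icc (1:ℤ) (m:ℤ), h j = ∑ k ∈ Finset.Icc 1 m, h (k:ℤ) :=
    sum_piece m hm h (fun z => z) 1 (m:ℤ)
      (by intro k h1 h2; simp only [Finset.mem_Icc]; omega)
      (by intro z hz; simp only [Finset.mem_Icc] at hz; exact ⟨z.toNat, by omega, by omega, by beta_reduce; omega⟩)
      (by intros k1 k2 a b c d e; beta_reduce at e; omega)
  have e2 : ∑ j ∈ Finset.Icc ((m:ℤ)+1) (2*m), h j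
      = ∑ k ∈ Finset.Icc 1 m, h (2*(m:ℤ)+1-(k:ℤ)) :=
    sum_piece m hm h (fun z => 2*(m:ℤ)+1-z) ((m:ℤ)+1) (2*m)
      (by intro k h1 h2; simp only [Finset.mem_Icc]; omega)
      (by intro z hz; simp only [Finset.mem_Icc] at hz
          exact ⟨(2*(m:ℤ)+1-z).toNat, by omega, by omega, by beta_reduce; omega⟩)
      (by intros k1 k2 a b c d e; beta_reduce at e; omega)
  have e3 : ∑ j ∈ Finset.Icc (-(m:ℤ)) (-1), h j = ∑ k ∈ Finset.Icc 1 m, h (-(k:ℤ)) :=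
    sum_piece m hm h (fun z => -z) (-(m:ℤ)) (-1)
      (by intro k h1 h2; simp only [Finset.mem_Icc]; omega)
      (by intro z hz; simp only [Finset.mem_Icc] at hz
          exact ⟨(-z).toNat, by omega, by omega, by beta_reduce; omega⟩)
      (by intros k1 k2 a b c d e; beta_reduce at e; omega)
  have e4 : ∑ j ∈ Finset.Icc (-(2*m):ℤ) (-(m:ℤ)-1), h j
      = ∑ k ∈ Finset.Icc 1 m, h (-(2*(m:ℤ)+1-(k:ℤ))) :=
    sum_piece m hm h (fun z => -(2*(m:ℤ)+1-z)) (-(2*m)) (-(m:ℤ)-1)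
      (by intro k h1 h2; simp only [Finset.mem_Icc]; omega)
      (by intro z hz; simp only [Finset.mem_Icc] at hz
          exact ⟨(2*(m:ℤ)+1+z).toNat, by omega, by omega, by beta_reduce; omega⟩)
      (by intros k1 k2 a b c d e; beta_reduce at e; omega)
  rw [e1, e2, e3, e4, ← Finset.sum_add_distrib, ← Finset.sum_add_distrib,
    ← Finset.sum_add_distrib]
  exact Finset.sum_congr rfl fun k _ => by omega

lemma star (hm : 1 ≤ m) (r : ℤ) :
    BP (2*m+1) ((m:ℤ)+1) r = ∑ k ∈ Finset.Icc 1 m,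
      (BP (2*m) (k:ℤ) (r-1) + BP (2*m) (2*(m:ℤ)+1-(k:ℤ)) r
        + BP (2*m) (-(k:ℤ)) r + BP (2*m) (-(2*(m:ℤ)+1-(k:ℤ))) r) := by
  rw [card_partition m hm r, sum_J m hm]
  apply Finset.sum_congr rfl
  intro k hk
  simp only [Finset.mem_Icc] at hk
  have e1 : (if 1 ≤ (k:ℤ) ∧ (k:ℤ) ≤ (m:ℤ) then (1:ℤ) else 0) = 1 := by
    rw [if_pos]; exact ⟨by exact_mod_cast hk.1, by exact_mod_cast hk.2⟩
  have e2 : (if 1 ≤ 2*(m:ℤ)+1-(k:ℤ) ∧ 2*(m:ℤ)+1-(k:ℤ) ≤ (m:ℤ) then (1:ℤ) else 0) = 0 := by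
    rw [if_neg]; omega
  have e3 : (if 1 ≤ -(k:ℤ) ∧ -(k:ℤ) ≤ (m:ℤ) then (1:ℤ) else 0) = 0 := by
    rw [if_neg]; omega
  have e4 : (if 1 ≤ -(2*(m:ℤ)+1-(k:ℤ)) ∧ -(2*(m:ℤ)+1-(k:ℤ)) ≤ (m:ℤ) then (1:ℤ) else 0) = 0 := by
    rw [if_neg]; omega
  rw [e1, e2, e3, e4]
  simp only [sub_zero]

lemma sumA (j : ℤ) :
    ∑ r ∈ Finset.range (2*m+1+1),
        Polynomial.C ((BP (2*m) j ((r:ℤ)-1) : ℤ)) * Polynomial.X ^ r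
    = Polynomial.X * BPpoly (2*m) j := by
  rw [Finset.sum_range_succ']
  have h0 : BP (2*m) j (((0:ℕ):ℤ)-1) = 0 := BP_eq_zero_of_lt (Or.inl (by norm_num))
  rw [h0]
  simp only [Nat.cast_zero, CharP.cast_eq_zero, Polynomial.C_0, zero_mul, pow_zero, mul_one,
    add_zero]
  rw [BPpoly, Finset.mul_sum]
  apply Finset.sum_congr rfl
  intro r _
  have : ((r+1:ℕ):ℤ) - 1 = (r:ℤ) := by push_cast; ring
  rw [this]
  ring

lemma sumB (j : ℤ) :
    ∑ r ∈ Finset.range (2*m+1+1),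
        Polynomial.C ((BP (2*m) j (r:ℤ) : ℤ)) * Polynomial.X ^ r
    = BPpoly (2*m) j := by
  rw [Finset.sum_range_succ]
  have h0 : BP (2*m) j ((2*m+1:ℕ):ℤ) = 0 :=
    BP_eq_zero_of_lt (Or.inr (by push_cast; omega))
  rw [h0, BPpoly]
  simp


/-- For odd `n = 2m+1`, the decomposition
`B^+_{n,(n+1)/2}(t) = Σ_{k=1}^{m} [(t B^+_{n-1,k}(t) + B^+_{n-1,n-k}(t)) +
(B^+_{n-1,-k}(t) + B^+_{n-1,-(n-k)}(t))]`. -/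
theorem stmt18 (m : ℕ) (hm : 1 ≤ m) :
    BPpoly (2 * m + 1) ((m : ℤ) + 1) =
      ∑ k ∈ Finset.Icc 1 m,
        ((Polynomial.X * BPpoly (2 * m) (k : ℤ) +
            BPpoly (2 * m) (2 * (m : ℤ) + 1 - k)) +
          (BPpoly (2 * m) (-(k : ℤ)) +
            BPpoly (2 * m) (-(2 * (m : ℤ) + 1 - k)))) := by
  have key : ∀ r : ℕ,
      (Polynomial.C ((BP (2*m+1) ((m:ℤ)+1) (r:ℤ) : ℤ)) * Polynomial.X ^ r : Polynomial ℤ)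
      = ∑ k ∈ Finset.Icc 1 m,
        ((Polynomial.C ((BP (2*m) (k:ℤ) ((r:ℤ)-1) : ℤ)) * Polynomial.X ^ r
          + Polynomial.C ((BP (2*m) (2*(m:ℤ)+1-(k:ℤ)) (r:ℤ) : ℤ)) * Polynomial.X ^ r)
          + (Polynomial.C ((BP (2*m) (-(k:ℤ)) (r:ℤ) : ℤ)) * Polynomial.X ^ r
          + Polynomial.C ((BP (2*m) (-(2*(m:ℤ)+1-(k:ℤ))) (r:ℤ) : ℤ)) * Polynomial.X ^ r)) := by
    intro r
    rw [star m hm (r:ℤ)]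
    push_cast
    rw [map_sum, Finset.sum_mul]
    apply Finset.sum_congr rfl
    intro k _
    rw [Polynomial.C_add, Polynomial.C_add, Polynomial.C_add]
    ring
  rw [BPpoly]
  calc ∑ r ∈ Finset.range (2*m+1+1),
        Polynomial.C ((BP (2*m+1) ((m:ℤ)+1) (r:ℤ) : ℤ)) * Polynomial.X ^ r
      = ∑ r ∈ Finset.range (2*m+1+1), ∑ k ∈ Finset.Icc 1 m,
        ((Polynomial.C ((BP (2*m) (k:ℤ) ((r:ℤ)-1) : ℤ)) * Polynomial.X ^ r
          + Polynomial.C ((BP (2*m) (2*(m:ℤ)+1-(k:ℤ)) (r:ℤ) : ℤ)) * Polynomial.X ^ r)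
          + (Polynomial.C ((BP (2*m) (-(k:ℤ)) (r:ℤ) : ℤ)) * Polynomial.X ^ r
          + Polynomial.C ((BP (2*m) (-(2*(m:ℤ)+1-(k:ℤ))) (r:ℤ) : ℤ)) * Polynomial.X ^ r)) :=
        Finset.sum_congr rfl (fun r _ => key r)
    _ = ∑ k ∈ Finset.Icc 1 m, ∑ r ∈ Finset.range (2*m+1+1),
        ((Polynomial.C ((BP (2*m) (k:ℤ) ((r:ℤ)-1) : ℤ)) * Polynomial.X ^ r
          + Polynomial.C ((BP (2*m) (2*(m:ℤ)+1-(k:ℤ)) (r:ℤ) : ℤ)) * Polynomial.X ^ r)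
          + (Polynomial.C ((BP (2*m) (-(k:ℤ)) (r:ℤ) : ℤ)) * Polynomial.X ^ r
          + Polynomial.C ((BP (2*m) (-(2*(m:ℤ)+1-(k:ℤ))) (r:ℤ) : ℤ)) * Polynomial.X ^ r)) :=
        Finset.sum_comm
    _ = _ := by
        apply Finset.sum_congr rfl
        intro k _
        rw [Finset.sum_add_distrib, Finset.sum_add_distrib, Finset.sum_add_distrib,
          sumA m ((k:ℤ)), sumB m (2*(m:ℤ)+1-(k:ℤ)), sumB m (-(k:ℤ)),
          sumB m (-(2*(m:ℤ)+1-(k:ℤ)))]
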